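/- arXiv:2305.15704 — 2 statements merged into one kernel-verified Lean document; each statement's English description precedes it below -/
import Mathlib

section
/- Let N ≥ 2 and let θ_0,…,θ_N be the OptISTA coefficient sequence. Define α_{i+1,i} = 1 + (2θ_i − 1)/θ_{i+1} and, for j ∈ [0:i−1], α_{i+1,j} = α_{j+1,j} + Σ_{k=j+1}^{i} ( 2θ_j/θ_{k+1} − α_{k,j}/θ_{k+1} ). Then for every j ∈ [0:N−2], the coefficients α_{N,j} satisfy the recurrence ( θ_{j+1}/(2θ_j − 1) ) (α_{N,j} − 1) − 1 = ( (θ_{j+1} − 1)/(2θ_{j+1} − 1) ) (α_{N,j+1} − 1). -/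
open Finset

/-! The one-step form of the stepsize recursion, `α_{i+1,j} = α_{i,j} + (2θ_j - α_{i,j})/θ_{i+1}`,
together with `θ_{i+1}² - θ_{i+1} = θ_i²`, makes `(2θ_j - α_{i,j}) θ_i²` invariant in `i`; the
diagonal value `α_{j+1,j}` is the same step taken from `α_{j,j} := 1`, and the modified last
relation `θ_N² - θ_N = 2θ_{N-1}²` doubles the invariant. Hence
`α_{N,j} = 2θ_j - 2(2θ_j - 1) θ_j² / θ_N²` for every `j < N`, and the recurrence between two
consecutive entries of the last row reduces to `θ_{j+1}² - θ_{j+1} = θ_j²`. -/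

lemma one_le_one_add_sqrt_div_two {s : ℝ} (hs : 0 ≤ s) : 1 ≤ (1 + √(1 + s)) / 2 := by
  have : 1 ≤ √(1 + s) := Real.one_le_sqrt.mpr (by linarith)
  linarith

lemma one_add_sqrt_div_two_sq_sub {s : ℝ} (hs : 0 ≤ s) :
    ((1 + √(1 + 4 * s)) / 2) ^ 2 - (1 + √(1 + 4 * s)) / 2 = s := by
  have := Real.sq_sqrt (show 0 ≤ 1 + 4 * s by linarith)
  linear_combination this / 4

lemma sub_mul_sq_of_step {a a' c t : ℝ} (ht : t ≠ 0) (h : a' = a + (c - a) / t) :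
    (c - a') * t ^ 2 = (c - a) * (t ^ 2 - t) := by
  subst h
  field_simp
  ring

lemma succ_eq_add_of_eq_add_sum_Icc {s g : ℕ → ℝ} {j N : ℕ}
    (h : ∀ i, j < i → i < N → s (i + 1) = s (j + 1) + ∑ k ∈ Icc (j + 1) i, g k)
    {i : ℕ} (hji : j < i) (hiN : i < N) : s (i + 1) = s i + g i := by
  obtain rfl | hji := eq_or_lt_of_le (Nat.succ_le_of_lt hji)
  · simp [h (j + 1) hji hiN]
  obtain ⟨m, rfl⟩ : ∃ m, i = m + 1 := ⟨i - 1, by omega⟩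
  rw [h (m + 1) (by omega) hiN, sum_Icc_succ_top (by omega), h m (by omega) (by omega), add_assoc]

lemma sub_mul_sq_invariant {t a : ℕ → ℝ} {c : ℝ} {m n : ℕ} (hmn : m ≤ n)
    (ht : ∀ i, m ≤ i → i < n → t (i + 1) ≠ 0)
    (hsq : ∀ i, m ≤ i → i < n → t (i + 1) ^ 2 - t (i + 1) = t i ^ 2)
    (hstep : ∀ i, m ≤ i → i < n → a (i + 1) = a i + (c - a i) / t (i + 1)) :
    (c - a n) * t n ^ 2 = (c - a m) * t m ^ 2 := by
  induction n, hmn using Nat.le_induction with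
  | base => rfl
  | succ n hmn ih =>
    rw [sub_mul_sq_of_step (ht n hmn n.lt_succ_self) (hstep n hmn n.lt_succ_self),
      hsq n hmn n.lt_succ_self, ih (fun i hi hin => ht i hi (by omega))
        (fun i hi hin => hsq i hi (by omega)) (fun i hi hin => hstep i hi (by omega))]

lemma last_row_closed_form {θ : ℕ → ℝ} {α : ℕ → ℕ → ℝ} {M : ℕ}
    (hθ : ∀ i, i ≤ M + 1 → θ i ≠ 0)
    (hsq : ∀ i, i < M → θ (i + 1) ^ 2 - θ (i + 1) = θ i ^ 2)
    (hsqN : θ (M + 1) ^ 2 - θ (M + 1) = 2 * θ M ^ 2)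
    (hdiag : ∀ i, i ≤ M → α (i + 1) i = 1 + (2 * θ i - 1) / θ (i + 1))
    (hstep : ∀ i j, j < i → i ≤ M → α (i + 1) j = α i j + (2 * θ j - α i j) / θ (i + 1))
    {j : ℕ} (hj : j ≤ M) :
    (2 * θ j - α (M + 1) j) * θ (M + 1) ^ 2 = 2 * (2 * θ j - 1) * θ j ^ 2 := by
  have hfirst := sub_mul_sq_of_step (hθ (j + 1) (by omega)) (hdiag j hj)
  obtain rfl | hjM := eq_or_lt_of_le hj
  · rw [hfirst, hsqN]
    ring
  obtain ⟨L, rfl⟩ : ∃ L, M = L + 1 := ⟨M - 1, by omega⟩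
  have hmiddle : (2 * θ j - α (L + 1) j) * θ (L + 1) ^ 2 = (2 * θ j - 1) * θ j ^ 2 := by
    rw [sub_mul_sq_invariant (a := fun i => α i j) (by omega : j + 1 ≤ L + 1)
      (fun i _ hi => hθ (i + 1) (by omega)) (fun i _ hi => hsq i (by omega))
      (fun i hi hiL => hstep i j (by omega) (by omega)), hfirst, hsq j hjM]
  rw [sub_mul_sq_of_step (hθ (L + 2) le_rfl) (hstep (L + 1) j hjM le_rfl), hsqN]
  linear_combination 2 * hmiddle

lemma recurrence_of_closed_form {x y T a b : ℝ} (hT : T ≠ 0) (hx : 2 * x - 1 ≠ 0)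
    (hy : 2 * y - 1 ≠ 0) (hxy : y ^ 2 - y = x ^ 2)
    (ha : (2 * x - a) * T ^ 2 = 2 * (2 * x - 1) * x ^ 2)
    (hb : (2 * y - b) * T ^ 2 = 2 * (2 * y - 1) * y ^ 2) :
    y / (2 * x - 1) * (a - 1) - 1 = (y - 1) / (2 * y - 1) * (b - 1) := by
  rw [div_mul_eq_mul_div, div_mul_eq_mul_div, div_sub_one hx, div_eq_div_iff hx hy]
  apply mul_left_cancel₀ (pow_ne_zero 2 hT)
  linear_combination (-(2 * y - 1) * y) * ha + (2 * x - 1) * (y - 1) * hb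
    + 2 * (2 * x - 1) * (2 * y - 1) * y * hxy

theorem alpha_recurrence_general
    (N : ℕ)
    (θ : ℕ → ℝ) (hθ0 : θ 0 = 1)
    (hθ : ∀ i, 1 ≤ i → i + 1 ≤ N → θ i = (1 + Real.sqrt (1 + 4 * θ (i - 1) ^ 2)) / 2)
    (hθN : θ N = (1 + Real.sqrt (1 + 8 * θ (N - 1) ^ 2)) / 2)
    (α : ℕ → ℕ → ℝ)
    (hαdiag : ∀ i, i < N → α (i + 1) i = 1 + (2 * θ i - 1) / θ (i + 1))
    (hαrec : ∀ i j, j < i → i < N →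
      α (i + 1) j = α (j + 1) j
        + ∑ k ∈ Finset.Icc (j + 1) i, (2 * θ j / θ (k + 1) - α k j / θ (k + 1))) :
    ∀ j, j + 2 ≤ N →
      θ (j + 1) / (2 * θ j - 1) * (α N j - 1) - 1
        = (θ (j + 1) - 1) / (2 * θ (j + 1) - 1) * (α N (j + 1) - 1) := by
  intro j hj
  obtain ⟨M, rfl⟩ : ∃ M, N = M + 1 := ⟨N - 1, by omega⟩
  simp only [add_tsub_cancel_right] at hθN
  have hθ_ge : ∀ i, i ≤ M + 1 → 1 ≤ θ i := by
    intro i hi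
    rcases Nat.eq_zero_or_pos i with rfl | hi0
    · exact hθ0.ge
    rcases eq_or_lt_of_le hi with rfl | hiM
    · exact hθN ▸ one_le_one_add_sqrt_div_two (by positivity)
    · exact hθ i hi0 hiM ▸ one_le_one_add_sqrt_div_two (by positivity)
  have hθ_ne : ∀ i, i ≤ M + 1 → θ i ≠ 0 := fun i hi => by linarith [hθ_ge i hi]
  have hsq : ∀ i, i < M → θ (i + 1) ^ 2 - θ (i + 1) = θ i ^ 2 := fun i hi => by
    rw [hθ (i + 1) (by omega) (by omega), add_tsub_cancel_right]
    exact one_add_sqrt_div_two_sq_sub (sq_nonneg (θ i))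
  have hsqN : θ (M + 1) ^ 2 - θ (M + 1) = 2 * θ M ^ 2 := by
    have h := one_add_sqrt_div_two_sq_sub (by positivity : 0 ≤ 2 * θ M ^ 2)
    rwa [← mul_assoc, show (4 : ℝ) * 2 = 8 by norm_num, ← hθN] at h
  have hstep : ∀ i j, j < i → i ≤ M → α (i + 1) j = α i j + (2 * θ j - α i j) / θ (i + 1) :=
    fun i j hji hiM => by
      rw [sub_div]
      exact succ_eq_add_of_eq_add_sum_Icc (s := fun i => α i j) (hαrec · j) hji (by omega)
  have hclosed {k : ℕ} (hk : k ≤ M) := last_row_closed_form hθ_ne hsq hsqN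
    (fun i hi => hαdiag i (by omega)) hstep hk
  have hθ_half : ∀ i, i ≤ M + 1 → 2 * θ i - 1 ≠ 0 := fun i hi => by linarith [hθ_ge i hi]
  exact recurrence_of_closed_form (hθ_ne _ le_rfl) (hθ_half j (by omega))
    (hθ_half (j + 1) (by omega)) (hsq j (by omega)) (hclosed (by omega)) (hclosed (by omega))

/-- Lemma 12, recurrence of the last-row stepsizes `α_{N,j}`.
With the OptISTA `θ`-sequence and stepsizes `α` defined by
`α_{i+1,i} = 1 + (2θ_i - 1)/θ_{i+1}` and, for `j < i`,
`α_{i+1,j} = α_{j+1,j} + Σ_{k=j+1}^{i} (2θ_j/θ_{k+1} - α_{k,j}/θ_{k+1})`, one has, for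
every `j ∈ [0:N-2]`,
`(θ_{j+1}/(2θ_j - 1)) (α_{N,j} - 1) - 1 = ((θ_{j+1} - 1)/(2θ_{j+1} - 1)) (α_{N,j+1} - 1)`. -/
theorem alpha_recurrence
    (N : ℕ) (hN : 2 ≤ N)
    (θ : ℕ → ℝ) (hθ0 : θ 0 = 1)
    (hθ : ∀ i, 1 ≤ i → i + 1 ≤ N → θ i = (1 + Real.sqrt (1 + 4 * θ (i - 1) ^ 2)) / 2)
    (hθN : θ N = (1 + Real.sqrt (1 + 8 * θ (N - 1) ^ 2)) / 2)
    (α : ℕ → ℕ → ℝ)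
    (hαdiag : ∀ i, i < N → α (i + 1) i = 1 + (2 * θ i - 1) / θ (i + 1))
    (hαrec : ∀ i j, j < i → i < N →
      α (i + 1) j = α (j + 1) j
        + ∑ k ∈ Finset.Icc (j + 1) i, (2 * θ j / θ (k + 1) - α k j / θ (k + 1))) :
    ∀ j, j + 2 ≤ N →
      θ (j + 1) / (2 * θ j - 1) * (α N j - 1) - 1
        = (θ (j + 1) - 1) / (2 * θ (j + 1) - 1) * (α N (j + 1) - 1) :=
  alpha_recurrence_general N θ hθ0 hθ hθN α hαdiag hαrec
end

section
/- Let N ≥ 1, R > 0, and let θ_0,…,θ_N be the OptISTA coefficient sequence. Define σ_i = 2θ_i/θ_N² for i ∈ [0:N−1] and σ_N = 1/θ_N; ζ_{N+1} = (θ_N − 1)R² / ( θ_N² (2θ_N − 1) ), ζ_N = ( θ_N/(θ_N − 1) ) ζ_{N+1}, and ζ_i = ( 2θ_i/(2θ_i − 1) ) ζ_{i+1} for i ∈ [0:N−1]; and a_i = ( 1/(θ_N² − 1) ) · ζ_i / ( σ_i √(ζ_i − ζ_{i+1}) ) for i ∈ [0:N]. Then 2 a_{j+1}² θ_{j+1}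 − 2 a_j² θ_j + a_j² ≤ 0 for all j ∈ [0:N−2], and a_N² θ_N − 2 a_{N−1}² θ_{N−1} + a_{N−1}² ≤ 0. (In fact both left-hand sides equal zero.) -/
/-!
Write `t_i = 2θ_i` for `i < N` and `t_N = θ_N`. Then `σ_i = t_i / θ_N²` and
`ζ_i = t_i / (t_i - 1) · ζ_{i+1}` for every `i ≤ N`, so `ζ_i - ζ_{i+1} = ζ_i / t_i`, and
substituting into the definition of `a_i` gives `a_i² t_i = C ζ_i` and `a_i² = C (ζ_i - ζ_{i+1})`
with `C = (θ_N² / (θ_N² - 1))²`. Both left-hand sides therefore telescope to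
`C ζ_{j+1} - C ζ_j + C (ζ_j - ζ_{j+1}) = 0`. The square roots are harmless since every `ζ_i ≥ 0`,
by the backward recursion from `ζ_{N+1} ≥ 0`.
-/

lemma one_le_one_add_sqrt_one_add_div_two {x : ℝ} (hx : 0 ≤ x) :
    1 ≤ (1 + √(1 + x)) / 2 := by
  have : 1 ≤ √(1 + x) := Real.one_le_sqrt.mpr (by linarith)
  linarith

lemma one_lt_one_add_sqrt_one_add_div_two {x : ℝ} (hx : 0 < x) :
    1 < (1 + √(1 + x)) / 2 := by
  have : 1 < √(1 + x) := (Real.lt_sqrt zero_le_one).mpr (by norm_num; linarith)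
  linarith

lemma nonneg_of_eq_mul_succ {ζ c : ℕ → ℝ} {n : ℕ} (hc : ∀ i < n, 0 ≤ c i)
    (hζ : ∀ i < n, ζ i = c i * ζ (i + 1)) (hn : 0 ≤ ζ n) {i : ℕ} (hi : i ≤ n) : 0 ≤ ζ i := by
  refine Nat.decreasingInduction (motive := fun k _ => 0 ≤ ζ k) (fun k hk ih => ?_) hn hi
  rw [hζ k hk]
  exact mul_nonneg (hc k hk) ih

section RatioStep

variable {t z z' : ℝ}

lemma sub_eq_div_of_eq_div_sub_one_mul (ht0 : t ≠ 0) (ht1 : t ≠ 1)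
    (h : z = t / (t - 1) * z') : z - z' = z / t := by
  have : t - 1 ≠ 0 := sub_ne_zero.mpr ht1
  rw [h]
  field_simp
  ring

lemma sq_mul_eq_of_eq_div_sub_one_mul {T σ a : ℝ} (ht : 1 < t) (hz : 0 ≤ z)
    (h : z = t / (t - 1) * z') (hσ : σ = t / T ^ 2)
    (ha : a = 1 / (T ^ 2 - 1) * (z / (σ * √(z - z')))) :
    a ^ 2 * t = (T ^ 2 / (T ^ 2 - 1)) ^ 2 * z := by
  have ht0 : t ≠ 0 := by linarith
  have hdiff := sub_eq_div_of_eq_div_sub_one_mul ht0 ht.ne' h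
  rw [ha, hσ, hdiff, mul_pow, div_pow, div_pow, mul_pow,
    Real.sq_sqrt (div_nonneg hz (by linarith))]
  -- for `z = 0` both sides vanish, the left one through division by zero
  rcases hz.eq_or_lt with rfl | hz_pos
  · simp
  · field_simp

end RatioStep

namespace OptISTA

variable {N : ℕ} {θ : ℕ → ℝ}

lemma one_le_theta (hθ0 : θ 0 = 1)
    (hθ : ∀ i, 1 ≤ i → i + 1 ≤ N → θ i = (1 + √(1 + 4 * θ (i - 1) ^ 2)) / 2)
    (hθN : θ N = (1 + √(1 + 8 * θ (N - 1) ^ 2)) / 2) {i : ℕ} (hi : i ≤ N) : 1 ≤ θ i := by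
  rcases Nat.eq_zero_or_pos i with rfl | hi0
  · exact hθ0.ge
  rcases hi.lt_or_eq with hiN | rfl
  · rw [hθ i hi0 hiN]; exact one_le_one_add_sqrt_one_add_div_two (by positivity)
  · rw [hθN]; exact one_le_one_add_sqrt_one_add_div_two (by positivity)

lemma one_lt_theta_last (hθ0 : θ 0 = 1)
    (hθ : ∀ i, 1 ≤ i → i + 1 ≤ N → θ i = (1 + √(1 + 4 * θ (i - 1) ^ 2)) / 2)
    (hθN : θ N = (1 + √(1 + 8 * θ (N - 1) ^ 2)) / 2) : 1 < θ N := by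
  have hθ1 := one_le_theta hθ0 hθ hθN (Nat.sub_le N 1)
  rw [hθN]
  exact one_lt_one_add_sqrt_one_add_div_two (by nlinarith)

lemma zeta_nonneg {R : ℝ} {ζ : ℕ → ℝ} (hθ1 : ∀ i ≤ N, 1 ≤ θ i)
    (hζN1 : ζ (N + 1) = (θ N - 1) * R ^ 2 / (θ N ^ 2 * (2 * θ N - 1)))
    (hζN : ζ N = θ N / (θ N - 1) * ζ (N + 1))
    (hζ : ∀ i < N, ζ i = 2 * θ i / (2 * θ i - 1) * ζ (i + 1)) {i : ℕ} (hi : i ≤ N) :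
    0 ≤ ζ i := by
  have hθN := hθ1 N le_rfl
  have hζN1_nonneg : 0 ≤ ζ (N + 1) := by
    rw [hζN1]; exact div_nonneg (by nlinarith [sq_nonneg R]) (by nlinarith)
  have hζN_nonneg : 0 ≤ ζ N := by
    rw [hζN]; exact mul_nonneg (div_nonneg (by linarith) (by linarith)) hζN1_nonneg
  refine nonneg_of_eq_mul_succ (fun j hj => ?_) hζ hζN_nonneg hi
  have := hθ1 j hj.le
  exact div_nonneg (by linarith) (by linarith)

end OptISTA

theorem a_sequence_inequalities_general
    (N : ℕ) (R : ℝ)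
    (θ : ℕ → ℝ) (hθ0 : θ 0 = 1)
    (hθ : ∀ i, 1 ≤ i → i + 1 ≤ N → θ i = (1 + Real.sqrt (1 + 4 * θ (i - 1) ^ 2)) / 2)
    (hθN : θ N = (1 + Real.sqrt (1 + 8 * θ (N - 1) ^ 2)) / 2)
    (σ : ℕ → ℝ)
    (hσ : ∀ i, i < N → σ i = 2 * θ i / (θ N) ^ 2)
    (hσN : σ N = 1 / θ N)
    (ζ : ℕ → ℝ)
    (hζN1 : ζ (N + 1) = (θ N - 1) * R ^ 2 / ((θ N) ^ 2 * (2 * θ N - 1)))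
    (hζN : ζ N = θ N / (θ N - 1) * ζ (N + 1))
    (hζ : ∀ i, i < N → ζ i = 2 * θ i / (2 * θ i - 1) * ζ (i + 1))
    (a : ℕ → ℝ)
    (ha : ∀ i, i ≤ N →
      a i = 1 / ((θ N) ^ 2 - 1) * (ζ i / (σ i * Real.sqrt (ζ i - ζ (i + 1))))) :
    (∀ j, j + 2 ≤ N →
      2 * (a (j + 1)) ^ 2 * θ (j + 1) - 2 * (a j) ^ 2 * θ j + (a j) ^ 2 ≤ 0) ∧
    (a N) ^ 2 * θ N - 2 * (a (N - 1)) ^ 2 * θ (N - 1) + (a (N - 1)) ^ 2 ≤ 0 := by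
  have hθ1 : ∀ i ≤ N, 1 ≤ θ i := fun i => OptISTA.one_le_theta hθ0 hθ hθN
  have hθN1 : 1 < θ N := OptISTA.one_lt_theta_last hθ0 hθ hθN
  have hN : N ≠ 0 := by rintro rfl; linarith
  have ht : ∀ i < N, 1 < 2 * θ i := fun i hi => by linarith [hθ1 i hi.le]
  have hζ_nonneg : ∀ i ≤ N, 0 ≤ ζ i := fun i => OptISTA.zeta_nonneg hθ1 hζN1 hζN hζ
  set C := (θ N ^ 2 / (θ N ^ 2 - 1)) ^ 2
  have hmul : ∀ i < N, a i ^ 2 * (2 * θ i) = C * ζ i := fun i hi =>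
    sq_mul_eq_of_eq_div_sub_one_mul (ht i hi) (hζ_nonneg i hi.le) (hζ i hi) (hσ i hi) (ha i hi.le)
  have hmulN : a N ^ 2 * θ N = C * ζ N :=
    sq_mul_eq_of_eq_div_sub_one_mul hθN1 (hζ_nonneg N le_rfl) hζN
      (by rw [hσN]; field_simp) (ha N le_rfl)
  have hsq : ∀ i < N, a i ^ 2 = C * (ζ i - ζ (i + 1)) := fun i hi => by
    have hθi : θ i ≠ 0 := by linarith [ht i hi]
    rw [sub_eq_div_of_eq_div_sub_one_mul (by positivity) (ht i hi).ne' (hζ i hi), mul_div_assoc',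
      ← hmul i hi]
    field_simp
  refine ⟨fun j hj => ?_, ?_⟩
  · linear_combination hmul (j + 1) (by omega) - hmul j (by omega) + hsq j (by omega)
  · obtain ⟨n, rfl⟩ := Nat.exists_eq_add_one_of_ne_zero hN
    rw [Nat.add_sub_cancel]
    linear_combination hmulN - hmul n (by omega) + hsq n (by omega)

/-- Lemma 20, sufficient inequalities of the composite lower-bound
construction.
With the OptISTA `θ`-sequence, `σ_i = 2θ_i/θ_N²` for `i ∈ [0:N-1]`, `σ_N = 1/θ_N`,
`ζ_{N+1} = (θ_N - 1) R²/(θ_N² (2θ_N - 1))`, `ζ_N = (θ_N/(θ_N - 1)) ζ_{N+1}`,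
`ζ_i = (2θ_i/(2θ_i - 1)) ζ_{i+1}`, and
`a_i = (1/(θ_N² - 1)) ζ_i/(σ_i √(ζ_i - ζ_{i+1}))`, one has
`2 a_{j+1}² θ_{j+1} - 2 a_j² θ_j + a_j² ≤ 0` for `j ∈ [0:N-2]` and
`a_N² θ_N - 2 a_{N-1}² θ_{N-1} + a_{N-1}² ≤ 0`. -/
theorem a_sequence_inequalities
    (N : ℕ) (hN : 1 ≤ N) (R : ℝ) (hR : 0 < R)
    (θ : ℕ → ℝ) (hθ0 : θ 0 = 1)
    (hθ : ∀ i, 1 ≤ i → i + 1 ≤ N → θ i = (1 + Real.sqrt (1 + 4 * θ (i - 1) ^ 2)) / 2)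
    (hθN : θ N = (1 + Real.sqrt (1 + 8 * θ (N - 1) ^ 2)) / 2)
    (σ : ℕ → ℝ)
    (hσ : ∀ i, i < N → σ i = 2 * θ i / (θ N) ^ 2)
    (hσN : σ N = 1 / θ N)
    (ζ : ℕ → ℝ)
    (hζN1 : ζ (N + 1) = (θ N - 1) * R ^ 2 / ((θ N) ^ 2 * (2 * θ N - 1)))
    (hζN : ζ N = θ N / (θ N - 1) * ζ (N + 1))
    (hζ : ∀ i, i < N → ζ i = 2 * θ i / (2 * θ i - 1) * ζ (i + 1))
    (a : ℕ → ℝ)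
    (ha : ∀ i, i ≤ N →
      a i = 1 / ((θ N) ^ 2 - 1) * (ζ i / (σ i * Real.sqrt (ζ i - ζ (i + 1))))) :
    (∀ j, j + 2 ≤ N →
      2 * (a (j + 1)) ^ 2 * θ (j + 1) - 2 * (a j) ^ 2 * θ j + (a j) ^ 2 ≤ 0) ∧
    (a N) ^ 2 * θ N - 2 * (a (N - 1)) ^ 2 * θ (N - 1) + (a (N - 1)) ^ 2 ≤ 0 :=
  a_sequence_inequalities_general N R θ hθ0 hθ hθN σ hσ hσN ζ hζN1 hζN hζ a ha
end
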